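/- For 0 < q < 1, writing d(n) = α q^{-n} + β q^n with α = q^{-1}/(q^{-1}-q) > 0 and β = -q/(q^{-1}-q) < 0, the function M ↦ d(M)² / (∑_{m=1}^{M} d(m)²) is strictly decreasing on the positive integers. -/

import Mathlib

noncomputable def qnum (q : ℝ) (n : ℕ) : ℝ := (q⁻¹ ^ n - q ^ n) / (q⁻¹ - q)

noncomputable def d (q : ℝ) (n : ℕ) : ℝ := qnum q (n + 1)

lemma d_pos {q : ℝ} (hq : 0 < q) (hq1 : q < 1) (n : ℕ) : 0 < d q n := by
  have hq' : 1 < q⁻¹ := (one_lt_inv₀ hq).mpr hq1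
  have h1 : q ^ (n + 1) < 1 := pow_lt_one₀ hq.le hq1 (Nat.succ_ne_zero n)
  have h2 : 1 < q⁻¹ ^ (n + 1) := one_lt_pow₀ hq' (Nat.succ_ne_zero n)
  have hc : 0 < q⁻¹ - q := by linarith
  exact div_pos (by linarith) hc

lemma key {q : ℝ} (hq : 0 < q) (hq1 : q < 1) {a b : ℕ} (hab : a ≤ b) :
    d q a * d q (b + 1) ≤ d q (a + 1) * d q b := by
  have hq0 : q ≠ 0 := ne_of_gt hq
  have hq' : 1 < q⁻¹ := (one_lt_inv₀ hq).mpr hq1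
  have hc : 0 < q⁻¹ - q := by linarith
  set x := q ^ (a + 1) with hxdef
  set y := q ^ (b + 1) with hydef
  have hx : 0 < x := pow_pos hq _
  have hy : 0 < y := pow_pos hq _
  have hyx : y ≤ x := pow_le_pow_of_le_one hq.le hq1.le (by omega)
  have hda : d q a = (x⁻¹ - x) / (q⁻¹ - q) := by
    simp [d, qnum, hxdef, inv_pow]
  have hdb : d q b = (y⁻¹ - y) / (q⁻¹ - q) := by
    simp [d, qnum, hydef, inv_pow]
  have hda1 : d q (a + 1) = ((x * q)⁻¹ - x * q) / (q⁻¹ - q) := by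
    simp [d, qnum, hxdef, inv_pow, pow_succ]; ring
  have hdb1 : d q (b + 1) = ((y * q)⁻¹ - y * q) / (q⁻¹ - q) := by
    simp [d, qnum, hydef, inv_pow, pow_succ]; ring
  rw [hda, hdb, hda1, hdb1, ← sub_nonneg]
  have heq : ((x * q)⁻¹ - x * q) / (q⁻¹ - q) * ((y⁻¹ - y) / (q⁻¹ - q)) -
      (x⁻¹ - x) / (q⁻¹ - q) * (((y * q)⁻¹ - y * q) / (q⁻¹ - q)) =
      (x ^ 2 - y ^ 2) * (1 - q ^ 2) / (x * y * q * (q⁻¹ - q) ^ 2) := by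
    have hq2 : 1 - q ^ 2 ≠ 0 := (by nlinarith : (0:ℝ) < 1 - q ^ 2).ne'
    field_simp
    ring
  rw [heq]
  have h1 : 0 ≤ x ^ 2 - y ^ 2 := by nlinarith
  have h2 : 0 ≤ 1 - q ^ 2 := by nlinarith
  positivity

lemma S_pos {q : ℝ} (hq : 0 < q) (hq1 : q < 1) {K : ℕ} (hK : 1 ≤ K) :
    0 < ∑ m ∈ Finset.Icc 1 K, d q m ^ 2 := by
  apply Finset.sum_pos (fun i _ => pow_pos (d_pos hq hq1 i) 2)
  exact ⟨1, by simp [Finset.mem_Icc]; omega⟩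

lemma step {q : ℝ} (hq : 0 < q) (hq1 : q < 1) {K : ℕ} (hK : 1 ≤ K) :
    d q (K + 1) ^ 2 * ∑ m ∈ Finset.Icc 1 K, d q m ^ 2 <
      d q K ^ 2 * ∑ m ∈ Finset.Icc 1 (K + 1), d q m ^ 2 := by
  have hins : Finset.Icc 1 (K + 1) = insert 1 (Finset.Icc 2 (K + 1)) := by
    ext m; simp [Finset.mem_Icc]; omega
  have hnotmem : (1 : ℕ) ∉ Finset.Icc 2 (K + 1) := by simp
  have hmap : Finset.Icc 2 (K + 1) = (Finset.Icc 1 K).map (addRightEmbedding 1) := by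
    rw [Finset.map_add_right_Icc]
  have hshift : ∑ m ∈ Finset.Icc 2 (K + 1), d q m ^ 2
      = ∑ m ∈ Finset.Icc 1 K, d q (m + 1) ^ 2 := by
    rw [hmap, Finset.sum_map]; rfl
  have h1 : d q (K + 1) ^ 2 * ∑ m ∈ Finset.Icc 1 K, d q m ^ 2
      ≤ d q K ^ 2 * ∑ m ∈ Finset.Icc 1 K, d q (m + 1) ^ 2 := by
    rw [Finset.mul_sum, Finset.mul_sum]
    apply Finset.sum_le_sum
    intro i hi
    have hiK : i ≤ K := (Finset.mem_Icc.mp hi).2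
    have hk := key hq hq1 hiK
    have h1 : 0 ≤ d q i * d q (K + 1) :=
      mul_nonneg (d_pos hq hq1 i).le (d_pos hq hq1 (K + 1)).le
    calc d q (K + 1) ^ 2 * d q i ^ 2 = (d q i * d q (K + 1)) ^ 2 := by ring
      _ ≤ (d q (i + 1) * d q K) ^ 2 := by
          apply pow_le_pow_left₀ h1 hk
      _ = d q K ^ 2 * d q (i + 1) ^ 2 := by ring
  have h2 : ∑ m ∈ Finset.Icc 1 (K + 1), d q m ^ 2
      = d q 1 ^ 2 + ∑ m ∈ Finset.Icc 1 K, d q (m + 1) ^ 2 := by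
    rw [hins, Finset.sum_insert hnotmem, hshift]
  rw [h2, mul_add]
  have h3 : 0 < d q K ^ 2 * d q 1 ^ 2 :=
    mul_pos (pow_pos (d_pos hq hq1 K) 2) (pow_pos (d_pos hq hq1 1) 2)
  linarith

theorem stmt_3 (q : ℝ) (hq : 0 < q) (hq1 : q < 1) :
    (∀ n : ℕ, d q n = (q⁻¹ / (q⁻¹ - q)) * (q⁻¹) ^ n + (-q / (q⁻¹ - q)) * q ^ n) ∧
    0 < q⁻¹ / (q⁻¹ - q) ∧ -q / (q⁻¹ - q) < 0 ∧
    ∀ M N : ℕ, 1 ≤ M → M < N →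
      d q N ^ 2 / (∑ m ∈ Finset.Icc 1 N, d q m ^ 2) <
        d q M ^ 2 / (∑ m ∈ Finset.Icc 1 M, d q m ^ 2) := by
  have hq' : 1 < q⁻¹ := (one_lt_inv₀ hq).mpr hq1
  have hc : 0 < q⁻¹ - q := by linarith
  refine ⟨fun n => ?_, div_pos (by linarith) hc, div_neg_of_neg_of_pos (by linarith) hc, ?_⟩
  · rw [d, qnum, pow_succ, pow_succ]; ring
  · intro M N hM hMN
    induction N, hMN using Nat.le_induction with
    | base =>
        rw [div_lt_div_iff₀ (S_pos hq hq1 (by omega)) (S_pos hq hq1 hM)]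
        exact step hq hq1 hM
    | succ n hn ih =>
        refine lt_trans ?_ ih
        rw [div_lt_div_iff₀ (S_pos hq hq1 (by omega)) (S_pos hq hq1 (by omega))]
        exact step hq hq1 (by omega)
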